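/- arXiv:2510.04809 — 2 statements merged into one kernel-verified Lean document; each statement's English description precedes it below -/
import Mathlib

section
/- Let f ∈ C²([a,1]) with f(a) = f(1) = 0, where e^{-π√2} < a < 1 and f not identically zero. Then 2∫ₐ¹ (f'(r))² r⁻¹ dr > 3∫ₐ¹ f(r)² r⁻³ dr. -/
/-!
Picone's identity: if `w > 0` solves `(P w')' + Q w = 0` on `[a, b]`, then for `f` vanishing
at the endpoints, `P f'² - Q f² = P (f' - w' f / w)² + (P w' f² / w)'`, so
`∫ P f'² - Q f² ≥ 0`, with equality only if `f / w` is constant, i.e. `f = 0`.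
For `P = 1 / r` and `Q = λ / r³` with `λ = 1 + c²`, the function
`w = r cos (c (log r - m))`, centred at `m = (log a + log b) / 2`, is such a solution, and it is
positive on `[a, b]` as soon as `c log (b / a) < π`. The theorem is the case `b = 1`,
`c = 1 / √2`, `λ = 3 / 2`.
-/

open Real Set intervalIntegral

section Picone

variable {a b : ℝ} {P Q w v f f' : ℝ → ℝ}

theorem hasDerivAt_picone {x : ℝ} (hP : P x ≠ 0) (hw : w x ≠ 0)
    (hw' : HasDerivAt w (v x / P x) x) (hv' : HasDerivAt v (-(Q x * w x)) x)
    (hf' : HasDerivAt f (f' x) x) :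
    HasDerivAt (fun y => v y * f y ^ 2 / w y)
      (P x * f' x ^ 2 - Q x * f x ^ 2 - P x * (f' x - v x * f x / (P x * w x)) ^ 2) x := by
  refine ((hv'.mul (hf'.pow 2)).div hw' hw).congr_deriv ?_
  simp only [Pi.mul_apply, Pi.pow_apply]
  field_simp
  ring

theorem eqOn_zero_of_deriv_mul_eq_mul_deriv (hw : ∀ x ∈ Icc a b, w x ≠ 0)
    (hwc : ContinuousOn w (Icc a b)) (hfc : ContinuousOn f (Icc a b))
    {w' : ℝ → ℝ} (hw' : ∀ x ∈ Ioo a b, HasDerivAt w (w' x) x)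
    (hf' : ∀ x ∈ Ioo a b, HasDerivAt f (f' x) x)
    (hwronski : ∀ x ∈ Ioo a b, f' x * w x = f x * w' x) (hfa : f a = 0) :
    EqOn f 0 (Icc a b) := by
  intro x hx
  rcases hx.1.eq_or_lt with rfl | hax
  · exact hfa
  have hsub : Icc a x ⊆ Icc a b := Icc_subset_Icc_right hx.2
  obtain ⟨c, hc, hslope⟩ := exists_hasDerivAt_eq_slope (fun y => f y / w y) (fun _ => 0) hax
    ((hfc.mono hsub).div (hwc.mono hsub) fun y hy => hw y (hsub hy)) fun y hy => by
      have hy' : y ∈ Ioo a b := ⟨hy.1, hy.2.trans_le hx.2⟩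
      refine ((hf' y hy').div (hw' y hy') (hw y (Ioo_subset_Icc_self hy'))).congr_deriv ?_
      rw [hwronski y hy', sub_self, zero_div]
  rw [eq_comm, div_eq_zero_iff, hfa, zero_div, sub_zero, div_eq_zero_iff] at hslope
  simpa [hw x hx, (sub_pos.2 hax).ne'] using hslope

/- `v` plays the flux `P w'`, so `hv'` is the Euler–Lagrange equation `(P w')' + Q w = 0` of
`∫ P f'² - Q f²`. -/
variable (hP : ∀ x ∈ Icc a b, 0 < P x) (hw : ∀ x ∈ Icc a b, 0 < w x)
  (hPc : ContinuousOn P (Icc a b)) (hQc : ContinuousOn Q (Icc a b))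
  (hwc : ContinuousOn w (Icc a b)) (hvc : ContinuousOn v (Icc a b))
  (hfc : ContinuousOn f (Icc a b)) (hf'c : ContinuousOn f' (Icc a b))
  (hw' : ∀ x ∈ Ioo a b, HasDerivAt w (v x / P x) x)
  (hv' : ∀ x ∈ Ioo a b, HasDerivAt v (-(Q x * w x)) x)
  (hf' : ∀ x ∈ Ioo a b, HasDerivAt f (f' x) x) (hfa : f a = 0) (hfb : f b = 0)
include hP hw hPc hQc hwc hvc hfc hf'c hw' hv' hf' hfa hfb

theorem integral_sub_eq_integral_picone_sq (hab : a ≤ b) :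
    ∫ x in a..b, (P x * f' x ^ 2 - Q x * f x ^ 2) =
      ∫ x in a..b, P x * (f' x - v x * f x / (P x * w x)) ^ 2 := by
  have hPw : ∀ x ∈ Icc a b, P x * w x ≠ 0 := fun x hx => (mul_pos (hP x hx) (hw x hx)).ne'
  have hgc : ContinuousOn (fun x => P x * (f' x - v x * f x / (P x * w x)) ^ 2) (Icc a b) :=
    hPc.mul ((hf'c.sub ((hvc.mul hfc).div (hPc.mul hwc) hPw)).pow 2)
  have hLc : ContinuousOn (fun x => P x * f' x ^ 2 - Q x * f x ^ 2) (Icc a b) :=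
    (hPc.mul (hf'c.pow 2)).sub (hQc.mul (hfc.pow 2))
  have hFTC := integral_eq_sub_of_hasDerivAt_of_le hab
    ((hvc.mul (hfc.pow 2)).div hwc fun x hx => (hw x hx).ne')
    (fun x hx => hasDerivAt_picone (hP x (Ioo_subset_Icc_self hx)).ne'
      (hw x (Ioo_subset_Icc_self hx)).ne' (hw' x hx) (hv' x hx) (hf' x hx))
    ((hLc.sub hgc).intervalIntegrable_of_Icc hab)
  rw [integral_sub (hLc.intervalIntegrable_of_Icc hab) (hgc.intervalIntegrable_of_Icc hab)]
    at hFTC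
  simpa [hfa, hfb, sub_eq_zero] using hFTC

theorem integral_mul_sq_lt_integral_mul_sq_deriv (hab : a < b) (hf0 : ∃ x ∈ Icc a b, f x ≠ 0) :
    ∫ x in a..b, Q x * f x ^ 2 < ∫ x in a..b, P x * f' x ^ 2 := by
  have hPw : ∀ x ∈ Icc a b, P x * w x ≠ 0 := fun x hx => (mul_pos (hP x hx) (hw x hx)).ne'
  have hgc : ContinuousOn (fun x => P x * (f' x - v x * f x / (P x * w x)) ^ 2) (Icc a b) :=
    hPc.mul ((hf'c.sub ((hvc.mul hfc).div (hPc.mul hwc) hPw)).pow 2)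
  have hg : ∃ x ∈ Icc a b, 0 < P x * (f' x - v x * f x / (P x * w x)) ^ 2 := by
    by_contra! hg
    have hwronski : ∀ x ∈ Ioo a b, f' x * w x = f x * (v x / P x) := fun x hx => by
      have hx' := Ioo_subset_Icc_self hx
      have : f' x - v x * f x / (P x * w x) = 0 :=
        pow_eq_zero_iff two_ne_zero |>.1 <|
          (nonpos_of_mul_nonpos_right (hg x hx') (hP x hx')).antisymm (sq_nonneg _)
      field_simp [(hP x hx').ne', (hw x hx').ne'] at this ⊢
      linarith
    obtain ⟨x, hx, hfx⟩ := hf0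
    exact hfx (eqOn_zero_of_deriv_mul_eq_mul_deriv (fun x hx => (hw x hx).ne') hwc hfc hw' hf'
      hwronski hfa hx)
  have hPf' : IntervalIntegrable (fun x => P x * f' x ^ 2) MeasureTheory.volume a b :=
    (hPc.mul (hf'c.pow 2)).intervalIntegrable_of_Icc hab.le
  have hQf : IntervalIntegrable (fun x => Q x * f x ^ 2) MeasureTheory.volume a b :=
    (hQc.mul (hfc.pow 2)).intervalIntegrable_of_Icc hab.le
  rw [← sub_pos, ← integral_sub hPf' hQf, integral_sub_eq_integral_picone_sq hP hw hPc hQc hwc hvc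
    hfc hf'c hw' hv' hf' hfa hfb hab.le]
  exact integral_pos hab hgc
    (fun x hx => mul_nonneg (hP x (Ioc_subset_Icc_self hx)).le (sq_nonneg _)) hg

end Picone

section GroundState

variable {c m r : ℝ}

theorem hasDerivAt_mul_cos_log (hr : 0 < r) :
    HasDerivAt (fun r => r * cos (c * (log r - m)))
      ((cos (c * (log r - m)) - c * sin (c * (log r - m))) / r / r⁻¹) r := by
  have hφ := ((hasDerivAt_log hr.ne').sub_const m).const_mul c
  refine ((hasDerivAt_id r).mul (hφ.cos)).congr_deriv ?_
  simp only [id]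
  field_simp
  ring

theorem hasDerivAt_cos_log_sub_sin_log_div (hr : 0 < r) :
    HasDerivAt (fun r => (cos (c * (log r - m)) - c * sin (c * (log r - m))) / r)
      (-((1 + c ^ 2) / r ^ 3 * (r * cos (c * (log r - m))))) r := by
  have hφ := ((hasDerivAt_log hr.ne').sub_const m).const_mul c
  refine ((hφ.cos.sub (hφ.sin.const_mul c)).div (hasDerivAt_id r) hr.ne').congr_deriv ?_
  simp only [id, Pi.sub_apply]
  field_simp
  ring

end GroundState

theorem integral_sq_div_cube_lt_integral_deriv_sq_div {a b c : ℝ} (ha : 0 < a) (hab : a < b)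
    (hc : 0 ≤ c) (hcab : c * log (b / a) < π) {f : ℝ → ℝ} (hf : ContDiffOn ℝ 1 f (Icc a b))
    (hfa : f a = 0) (hfb : f b = 0) (hf0 : ∃ r ∈ Icc a b, f r ≠ 0) :
    (1 + c ^ 2) * ∫ r in a..b, f r ^ 2 / r ^ 3 < ∫ r in a..b, deriv f r ^ 2 / r := by
  set m := (log a + log b) / 2 with hm
  have hpos : ∀ r ∈ Icc a b, 0 < r := fun r hr => ha.trans_le hr.1
  have hr0 : ∀ r ∈ Icc a b, r ≠ 0 := fun r hr => (hpos r hr).ne'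
  have hcos : ∀ r ∈ Icc a b, 0 < cos (c * (log r - m)) := by
    intro r hr'
    have h1 := log_le_log ha hr'.1
    have h2 := log_le_log (hpos r hr') hr'.2
    rw [log_div (hab.trans' ha).ne' ha.ne'] at hcab
    apply cos_pos_of_mem_Ioo
    constructor <;>
      nlinarith [mul_nonneg hc (sub_nonneg.2 h1), mul_nonneg hc (sub_nonneg.2 h2)]
  have hderiv : ∀ r ∈ Ioo a b, HasDerivAt f (derivWithin f (Icc a b) r) r := fun r hr' =>
    ((hf.differentiableOn one_ne_zero).differentiableAt (Icc_mem_nhds hr'.1 hr'.2)).hasDerivAt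
      |>.congr_deriv (derivWithin_of_mem_nhds (Icc_mem_nhds hr'.1 hr'.2)).symm
  have key := integral_mul_sq_lt_integral_mul_sq_deriv (P := fun r => r⁻¹)
    (Q := fun r => (1 + c ^ 2) / r ^ 3) (w := fun r => r * cos (c * (log r - m)))
    (v := fun r => (cos (c * (log r - m)) - c * sin (c * (log r - m))) / r)
    (fun r hr' => inv_pos.2 (hpos r hr')) (fun r hr' => mul_pos (hpos r hr') (hcos r hr'))
    (continuousOn_inv₀.mono fun r hr' => hr0 r hr')
    (continuousOn_const.div (continuousOn_id.pow 3) fun r hr' => pow_ne_zero 3 (hr0 r hr'))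
    (by fun_prop (disch := assumption)) (by fun_prop (disch := assumption)) hf.continuousOn
    (hf.continuousOn_derivWithin (uniqueDiffOn_Icc hab) le_rfl)
    (fun r hr' => hasDerivAt_mul_cos_log (hpos r (Ioo_subset_Icc_self hr')))
    (fun r hr' => hasDerivAt_cos_log_sub_sin_log_div (hpos r (Ioo_subset_Icc_self hr')))
    hderiv hfa hfb hab hf0
  calc (1 + c ^ 2) * ∫ r in a..b, f r ^ 2 / r ^ 3
      = ∫ r in a..b, (1 + c ^ 2) / r ^ 3 * f r ^ 2 := by
        rw [← integral_const_mul]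
        exact integral_congr fun r _ => by ring
    _ < ∫ r in a..b, r⁻¹ * derivWithin f (Icc a b) r ^ 2 := key
    _ = ∫ r in a..b, deriv f r ^ 2 / r := integral_congr_Ioo_of_le hab.le fun r hr' => by
        rw [derivWithin_of_mem_nhds (Icc_mem_nhds hr'.1 hr'.2), inv_mul_eq_div]

/-- For e^{-π√2} < a < 1 and f C² on [a,1] vanishing at both endpoints and not
identically zero, one has 2∫ₐ¹ (f')² r⁻¹ dr > 3∫ₐ¹ f² r⁻³ dr. -/
theorem key_inequality (a : ℝ) (ha : Real.exp (-π * Real.sqrt 2) < a)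
    (ha1 : a < 1) (f : ℝ → ℝ) (hf : ContDiffOn ℝ 2 f (Icc a 1))
    (hfa : f a = 0) (hf1 : f 1 = 0) (hne : ∃ r ∈ Icc a 1, f r ≠ 0) :
    2 * ∫ r in a..1, (deriv f r) ^ 2 / r >
      3 * ∫ r in a..1, (f r) ^ 2 / r ^ 3 := by
  have ha0 : 0 < a := (exp_pos _).trans ha
  have hlog : -π * √2 < log a := (lt_log_iff_exp_lt ha0).2 ha
  have hsqrt : √2 * √2 = 2 := mul_self_sqrt zero_le_two
  have hc : √2 / 2 * log (1 / a) < π := by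
    rw [one_div, log_inv]
    have h := mul_lt_mul_of_pos_left hlog (sqrt_pos.2 zero_lt_two)
    rw [show √2 * (-π * √2) = -2 * π by linear_combination (-π) * hsqrt] at h
    linarith
  have h := integral_sq_div_cube_lt_integral_deriv_sq_div ha0 ha1 (by positivity) hc
    (hf.of_le one_le_two) hfa hf1 hne
  have hcoeff : 1 + (√2 / 2) ^ 2 = 3 / 2 := by
    rw [div_pow, sq_sqrt zero_le_two]
    norm_num
  rw [hcoeff] at h
  linarith
end

section
/- For the Navier boundary condition matrix M(t) with rows (j_ℓ(t), i_ℓ(t)) and (t²j_ℓ''(t) + σ(N-1)t j_ℓ'(t), t²i_ℓ''(t) + σ(N-1)t i_ℓ'(t)), one has det M(t) = 2t² j_ℓ(t) i_ℓ(t) - t(N-1)(1-σ)(j_ℓ(t) i_{ℓ+1}(t) + j_{ℓ+1}(t) i_ℓ(t)) for t > 0. -/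
open Real

/-- The Bessel function of the first kind `J_ν`, for positive real argument,
via its series representation. -/
noncomputable def besselJ (ν x : ℝ) : ℝ :=
  ∑' k : ℕ, (-1) ^ k / ((k.factorial : ℝ) * Real.Gamma (ν + k + 1)) *
    (x / 2) ^ (2 * (k : ℝ) + ν)

/-- The modified Bessel function of the first kind `I_ν`, for positive real
argument, via its series representation. -/
noncomputable def besselI (ν x : ℝ) : ℝ :=
  ∑' k : ℕ, 1 / ((k.factorial : ℝ) * Real.Gamma (ν + k + 1)) *
    (x / 2) ^ (2 * (k : ℝ) + ν)

/-- The ultraspherical Bessel function `j_ℓ` in dimension `N`. -/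
noncomputable def usj (N : ℕ) (ℓ : ℕ) (x : ℝ) : ℝ :=
  x ^ (1 - (N : ℝ) / 2) * besselJ ((ℓ : ℝ) + (N : ℝ) / 2 - 1) x

/-- The modified ultraspherical Bessel function `i_ℓ` in dimension `N`. -/
noncomputable def usi (N : ℕ) (ℓ : ℕ) (x : ℝ) : ℝ :=
  x ^ (1 - (N : ℝ) / 2) * besselI ((ℓ : ℝ) + (N : ℝ) / 2 - 1) x


/-!
Write `f_ℓ` for `j_ℓ` (`ε = -1`) or `i_ℓ` (`ε = 1`). For `x > 0`,
`f_ℓ(x) = x^ℓ 𝒞_ν(εx²/4) / 2^ν` with `ν = ℓ + N/2 - 1`, where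
`𝒞_ν(z) = ∑ zᵏ / (k! Γ(ν + k + 1))` is the Bessel–Clifford function. Termwise,
`𝒞_ν' = 𝒞_{ν+1}` and `𝒞_ν = (ν + 1) 𝒞_{ν+1} + z 𝒞_{ν+2}`; these give
`x f_ℓ' = ℓ f_ℓ + ε x f_{ℓ+1}` and the three-term recurrence
`x f_ℓ = (2ℓ + N) f_{ℓ+1} + ε x f_{ℓ+2}`, hence
`x² f_ℓ'' = (ℓ² - ℓ + εx²) f_ℓ - ε (N - 1) x f_{ℓ+1}`. In the determinant the terms
`(ℓ² - ℓ + σ(N - 1)ℓ) j_ℓ i_ℓ` cancel, and what remains is the claimed expression.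
-/
open Filter Topology Nat

noncomputable section

namespace BesselClifford

def coeff (ν : ℝ) (k : ℕ) : ℝ := (k ! * Gamma (ν + k + 1))⁻¹

theorem succ_mul_coeff_succ (ν : ℝ) (k : ℕ) :
    (k + 1 : ℝ) * coeff ν (k + 1) = coeff (ν + 1) k := by
  rw [coeff, coeff, Nat.factorial_succ, show ν + ((k + 1 : ℕ) : ℝ) + 1 = ν + 1 + k + 1 by
    push_cast; ring]
  push_cast
  field_simp

theorem coeff_eq_mul_coeff_add_one {ν : ℝ} {k : ℕ} (h : ν + k + 1 ≠ 0) :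
    coeff ν k = (ν + k + 1) * coeff (ν + 1) k := by
  rw [coeff, coeff, show ν + 1 + k + 1 = ν + k + 1 + 1 by ring, Gamma_add_one h]
  field_simp

theorem abs_coeff_le_inv_factorial (ν : ℝ) : ∀ᶠ k : ℕ in atTop, |coeff ν k| ≤ (k ! : ℝ)⁻¹ := by
  filter_upwards [eventually_ge_atTop ⌈1 - ν⌉₊] with k hk
  have hk' : 1 - ν ≤ k := Nat.ceil_le.mp hk
  have hΓ : Gamma 2 ≤ Gamma (ν + k + 1) :=
    Gamma_strictMonoOn_Ici.monotoneOn Set.self_mem_Ici (Set.mem_Ici.2 (by linarith))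
      (by linarith)
  rw [Gamma_two] at hΓ
  rw [coeff, abs_inv, abs_mul, Nat.abs_cast, abs_of_pos (by linarith)]
  exact inv_anti₀ (by positivity) (le_mul_of_one_le_right (by positivity) hΓ)

theorem summable_abs_coeff_mul_pow (ν R : ℝ) : Summable fun k => |coeff ν k| * |R| ^ k := by
  refine Summable.of_norm_bounded_eventually_nat (Real.summable_pow_div_factorial |R|) ?_
  filter_upwards [abs_coeff_le_inv_factorial ν] with k hk
  rw [Real.norm_eq_abs, abs_of_nonneg (by positivity), div_eq_inv_mul]
  exact mul_le_mul_of_nonneg_right hk (by positivity)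

theorem summable_coeff_mul_pow (ν z : ℝ) : Summable fun k => coeff ν k * z ^ k :=
  .of_abs <| by simpa only [abs_mul, abs_pow] using summable_abs_coeff_mul_pow ν z

end BesselClifford

open BesselClifford

/-- For `x > 0`, `J_ν(x) = (x/2)^ν 𝒞_ν(-x²/4)` and `I_ν(x) = (x/2)^ν 𝒞_ν(x²/4)`. -/
def besselClifford (ν z : ℝ) : ℝ := ∑' k, coeff ν k * z ^ k

theorem hasDerivAt_besselClifford (ν z : ℝ) :
    HasDerivAt (besselClifford ν) (besselClifford (ν + 1) z) z := by
  -- shifting the index keeps the termwise derivative free of the exponent `k - 1`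
  have hshift : besselClifford ν = fun y => coeff ν 0 + ∑' k, coeff ν (k + 1) * y ^ (k + 1) := by
    funext y
    rw [besselClifford, (summable_coeff_mul_pow ν y).tsum_eq_zero_add, pow_zero, mul_one]
  rw [hshift]
  refine HasDerivAt.const_add _ ?_
  set R := |z| + 1
  refine hasDerivAt_tsum_of_isPreconnected (summable_abs_coeff_mul_pow (ν + 1) R)
    (Metric.isOpen_ball (x := (0 : ℝ)) (ε := R)) (convex_ball 0 R).isPreconnected
    (g := fun k y => coeff ν (k + 1) * y ^ (k + 1)) (g' := fun k y => coeff (ν + 1) k * y ^ k)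
    (y₀ := 0) (y := z) (fun k y _ => ?_) (fun k y hy => ?_)
    (Metric.mem_ball_self (by positivity)) (by simp) (by simp [R])
  · refine ((hasDerivAt_pow (k + 1) y).const_mul (coeff ν (k + 1))).congr_deriv ?_
    rw [← succ_mul_coeff_succ]
    push_cast
    ring
  · rw [mem_ball_zero_iff, Real.norm_eq_abs] at hy
    rw [Real.norm_eq_abs, abs_mul, abs_pow]
    exact mul_le_mul_of_nonneg_left
      (pow_le_pow_left₀ (abs_nonneg y) (hy.le.trans (le_abs_self R)) k) (abs_nonneg _)

theorem mul_besselClifford_add_one (ν z : ℝ) :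
    z * besselClifford (ν + 1) z = ∑' k : ℕ, (k : ℝ) * coeff ν k * z ^ k := by
  have hterm : ∀ k : ℕ,
      z * (coeff (ν + 1) k * z ^ k) = ((k + 1 : ℕ) : ℝ) * coeff ν (k + 1) * z ^ (k + 1) :=
    fun k => by rw [← succ_mul_coeff_succ]; push_cast; ring
  have hs : Summable fun k : ℕ => ((k + 1 : ℕ) : ℝ) * coeff ν (k + 1) * z ^ (k + 1) :=
    ((summable_coeff_mul_pow (ν + 1) z).mul_left z).congr hterm
  rw [besselClifford, ← tsum_mul_left,
    tsum_eq_zero_add' (f := fun k : ℕ => (k : ℝ) * coeff ν k * z ^ k) hs]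
  simp only [CharP.cast_eq_zero, zero_mul, zero_add]
  exact tsum_congr hterm

theorem besselClifford_recurrence {ν : ℝ} (hν : -1 < ν) (z : ℝ) :
    besselClifford ν z = (ν + 1) * besselClifford (ν + 1) z + z * besselClifford (ν + 2) z := by
  have hsplit : ∀ k : ℕ, coeff ν k * z ^ k =
      (ν + 1) * (coeff (ν + 1) k * z ^ k) + (k : ℝ) * coeff (ν + 1) k * z ^ k := fun k => by
    rw [coeff_eq_mul_coeff_add_one (by linarith [k.cast_nonneg (α := ℝ)])]
    ring
  have hs₁ := (summable_coeff_mul_pow (ν + 1) z).mul_left (ν + 1)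
  have hs₂ : Summable fun k : ℕ => (k : ℝ) * coeff (ν + 1) k * z ^ k :=
    ((summable_coeff_mul_pow ν z).sub hs₁).congr fun k => by rw [hsplit]; ring
  calc besselClifford ν z
      = ∑' k : ℕ, ((ν + 1) * (coeff (ν + 1) k * z ^ k) + (k : ℝ) * coeff (ν + 1) k * z ^ k) :=
        tsum_congr hsplit
    _ = (ν + 1) * besselClifford (ν + 1) z + z * besselClifford (ν + 2) z := by
        rw [hs₁.tsum_add hs₂, tsum_mul_left, show ν + 2 = ν + 1 + 1 by ring,
          mul_besselClifford_add_one]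
        rfl

/-- For `x > 0`, the choices `ε = -1` and `ε = 1` give `x^(-α) J_{ℓ+α}(x)` and
`x^(-α) I_{ℓ+α}(x)`; the ultraspherical `j_ℓ`, `i_ℓ` in dimension `N` are the case
`α = N/2 - 1`. -/
def ultrasphericalBessel (ε α : ℝ) (ℓ : ℕ) (x : ℝ) : ℝ :=
  x ^ ℓ * besselClifford (ℓ + α) (ε * x ^ 2 / 4) / 2 ^ ((ℓ : ℝ) + α)

section ultrasphericalBessel

variable (ε α : ℝ) (ℓ : ℕ) {x : ℝ}

theorem ultrasphericalBessel_succ (x : ℝ) :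
    ultrasphericalBessel ε α (ℓ + 1) x =
      x ^ (ℓ + 1) * besselClifford (ℓ + α + 1) (ε * x ^ 2 / 4) / (2 * 2 ^ ((ℓ : ℝ) + α)) := by
  rw [ultrasphericalBessel, show ((ℓ + 1 : ℕ) : ℝ) + α = ℓ + α + 1 by push_cast; ring,
    rpow_add_one two_ne_zero, mul_comm (2 : ℝ)]

theorem ultrasphericalBessel_add_two (x : ℝ) :
    ultrasphericalBessel ε α (ℓ + 2) x =
      x ^ (ℓ + 2) * besselClifford (ℓ + α + 2) (ε * x ^ 2 / 4) / (4 * 2 ^ ((ℓ : ℝ) + α)) := by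
  rw [ultrasphericalBessel, show ((ℓ + 2 : ℕ) : ℝ) + α = ℓ + α + 2 by push_cast; ring,
    rpow_add two_pos, show (2 : ℝ) ^ (2 : ℝ) = 4 by norm_num, mul_comm (4 : ℝ)]

theorem hasDerivAt_ultrasphericalBessel (hx : x ≠ 0) :
    HasDerivAt (ultrasphericalBessel ε α ℓ)
      (ℓ / x * ultrasphericalBessel ε α ℓ x + ε * ultrasphericalBessel ε α (ℓ + 1) x) x := by
  have hC := (hasDerivAt_besselClifford (ℓ + α) (ε * x ^ 2 / 4)).comp x
    (((hasDerivAt_pow 2 x).const_mul ε).div_const 4)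
  refine (((hasDerivAt_pow ℓ x).mul hC).div_const (2 ^ ((ℓ : ℝ) + α))).congr_deriv ?_
  have hpow : (ℓ : ℝ) * x ^ (ℓ - 1) = ℓ / x * x ^ ℓ := by
    rcases ℓ with _ | m
    · simp
    · field_simp
      simp [pow_succ]
  rw [ultrasphericalBessel_succ, ultrasphericalBessel, hpow, Function.comp_apply]
  field_simp
  ring

theorem mul_deriv_ultrasphericalBessel (hx : x ≠ 0) :
    x * deriv (ultrasphericalBessel ε α ℓ) x =
      ℓ * ultrasphericalBessel ε α ℓ x + ε * x * ultrasphericalBessel ε α (ℓ + 1) x := by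
  rw [(hasDerivAt_ultrasphericalBessel ε α ℓ hx).deriv]
  field_simp

theorem ultrasphericalBessel_recurrence (h : -1 < ℓ + α) (x : ℝ) :
    x * ultrasphericalBessel ε α ℓ x =
      2 * (ℓ + α + 1) * ultrasphericalBessel ε α (ℓ + 1) x +
        ε * x * ultrasphericalBessel ε α (ℓ + 2) x := by
  rw [ultrasphericalBessel_succ, ultrasphericalBessel_add_two, ultrasphericalBessel,
    besselClifford_recurrence h, add_assoc]
  field_simp
  ring

theorem sq_mul_deriv_deriv_ultrasphericalBessel (h : -1 < ℓ + α) (hx : x ≠ 0) :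
    x ^ 2 * deriv (deriv (ultrasphericalBessel ε α ℓ)) x =
      (ℓ ^ 2 - ℓ + ε * x ^ 2) * ultrasphericalBessel ε α ℓ x -
        ε * (2 * α + 1) * x * ultrasphericalBessel ε α (ℓ + 1) x := by
  have hderiv : deriv (ultrasphericalBessel ε α ℓ) =ᶠ[𝓝 x]
      fun y => ℓ * y⁻¹ * ultrasphericalBessel ε α ℓ y + ε * ultrasphericalBessel ε α (ℓ + 1) y :=
    (eventually_ne_nhds hx).mono fun y hy => by
      rw [(hasDerivAt_ultrasphericalBessel ε α ℓ hy).deriv, div_eq_mul_inv]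
  have hderiv' : HasDerivAt (fun y => ℓ * y⁻¹ * ultrasphericalBessel ε α ℓ y +
      ε * ultrasphericalBessel ε α (ℓ + 1) y) _ x :=
    (((hasDerivAt_inv hx).const_mul (ℓ : ℝ)).mul (hasDerivAt_ultrasphericalBessel ε α ℓ hx)).add
      ((hasDerivAt_ultrasphericalBessel ε α (ℓ + 1) hx).const_mul ε)
  rw [hderiv.deriv_eq, hderiv'.deriv, add_assoc ℓ 1 1]
  push_cast
  field_simp
  linear_combination -(ε * x) * ultrasphericalBessel_recurrence ε α ℓ h x

end ultrasphericalBessel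

theorem ultrasphericalBessel_eq_rpow_mul {x : ℝ} (hx : 0 < x) (ε α : ℝ) (ℓ : ℕ) :
    ultrasphericalBessel ε α ℓ x =
      x ^ (-α) * ((x / 2) ^ ((ℓ : ℝ) + α) * besselClifford (ℓ + α) (ε * x ^ 2 / 4)) := by
  rw [ultrasphericalBessel, div_rpow hx.le two_pos.le, rpow_add hx, rpow_natCast,
    rpow_neg hx.le]
  field_simp

theorem tsum_bessel_series_eq {x : ℝ} (hx : 0 < x) (ε ν : ℝ) :
    ∑' k : ℕ, ε ^ k / (k ! * Gamma (ν + k + 1)) * (x / 2) ^ (2 * (k : ℝ) + ν) =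
      (x / 2) ^ ν * besselClifford ν (ε * x ^ 2 / 4) := by
  rw [besselClifford, ← tsum_mul_left]
  refine tsum_congr fun k => ?_
  rw [rpow_add (by positivity), show 2 * (k : ℝ) = ((2 * k : ℕ) : ℝ) by push_cast; ring,
    rpow_natCast, coeff, pow_mul]
  ring

theorem usj_eq_ultrasphericalBessel (N ℓ : ℕ) {x : ℝ} (hx : 0 < x) :
    usj N ℓ x = ultrasphericalBessel (-1) ((N : ℝ) / 2 - 1) ℓ x := by
  rw [usj, besselJ, tsum_bessel_series_eq hx, ultrasphericalBessel_eq_rpow_mul hx]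
  ring_nf

theorem usi_eq_ultrasphericalBessel (N ℓ : ℕ) {x : ℝ} (hx : 0 < x) :
    usi N ℓ x = ultrasphericalBessel 1 ((N : ℝ) / 2 - 1) ℓ x := by
  have hseries := tsum_bessel_series_eq hx 1 ((ℓ : ℝ) + (N : ℝ) / 2 - 1)
  simp only [one_pow] at hseries
  rw [usi, besselI, hseries, ultrasphericalBessel_eq_rpow_mul hx]
  ring_nf

end

/-- The determinant of the Navier boundary-condition matrix for the bilaplacian
on the unit ball with phase `ℓ` and Poisson coefficient `σ`:
det M(t) = 2t² j_ℓ(t) i_ℓ(t) - t(N-1)(1-σ)(j_ℓ(t) i_{ℓ+1}(t) + j_{ℓ+1}(t) i_ℓ(t)). -/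
theorem navier_det (N : ℕ) (hN : 2 ≤ N) (σ : ℝ) (ℓ : ℕ) (t : ℝ) (ht : 0 < t) :
    Matrix.det !![usj N ℓ t, usi N ℓ t;
      t ^ 2 * deriv (deriv (usj N ℓ)) t + σ * ((N : ℝ) - 1) * t * deriv (usj N ℓ) t,
      t ^ 2 * deriv (deriv (usi N ℓ)) t + σ * ((N : ℝ) - 1) * t * deriv (usi N ℓ) t] =
      2 * t ^ 2 * usj N ℓ t * usi N ℓ t -
        t * ((N : ℝ) - 1) * (1 - σ) *
          (usj N ℓ t * usi N (ℓ + 1) t + usj N (ℓ + 1) t * usi N ℓ t) := by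
  have hα : -1 < (ℓ : ℝ) + ((N : ℝ) / 2 - 1) := by
    have : (2 : ℝ) ≤ N := by exact_mod_cast hN
    linarith [ℓ.cast_nonneg (α := ℝ)]
  have hj : usj N ℓ =ᶠ[𝓝 t] ultrasphericalBessel (-1) ((N : ℝ) / 2 - 1) ℓ :=
    (eventually_gt_nhds ht).mono fun x hx => usj_eq_ultrasphericalBessel N ℓ hx
  have hi : usi N ℓ =ᶠ[𝓝 t] ultrasphericalBessel 1 ((N : ℝ) / 2 - 1) ℓ :=
    (eventually_gt_nhds ht).mono fun x hx => usi_eq_ultrasphericalBessel N ℓ hx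
  rw [Matrix.det_fin_two_of, hj.deriv_eq, hj.deriv.deriv_eq, hi.deriv_eq, hi.deriv.deriv_eq]
  simp only [usj_eq_ultrasphericalBessel N _ ht, usi_eq_ultrasphericalBessel N _ ht]
  linear_combination
    ultrasphericalBessel (-1) ((N : ℝ) / 2 - 1) ℓ t *
      (sq_mul_deriv_deriv_ultrasphericalBessel 1 _ ℓ hα ht.ne' +
        σ * ((N : ℝ) - 1) * mul_deriv_ultrasphericalBessel 1 ((N : ℝ) / 2 - 1) ℓ ht.ne') -
    ultrasphericalBessel 1 ((N : ℝ) / 2 - 1) ℓ t *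
      (sq_mul_deriv_deriv_ultrasphericalBessel (-1) _ ℓ hα ht.ne' +
        σ * ((N : ℝ) - 1) * mul_deriv_ultrasphericalBessel (-1) ((N : ℝ) / 2 - 1) ℓ ht.ne')
end
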